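/- arXiv:1504.00389 — 8 statements merged into one kernel-verified Lean document; each statement's English description precedes it below -/
import Mathlib

section
/- (Absorption identity) For every f : ℕ → ℕ, all k, n ∈ ℕ, and every integer i with 0 < i ≤ k, one has i · n · binom(k,n)_f = k · ∑_{s=0}^{n} s · binom(i,s)_f · binom(k−i, n−s)_f. -/
/-!
With `P = ∑ₘ f(m) Xᵐ` one has `binom(k,n)_f = [Xⁿ] Pᵏ`, and the Euler operator `X · d/dX`
multiplies `[Xⁿ]` by `n`. Writing `k = i + b`, the identity is the coefficient of `Xⁿ` in
`(i + b) • X (Pⁱ)' Pᵇ = i • X (Pⁱ⁺ᵇ)'`, both sides being `i (i + b) X P' Pⁱ⁺ᵇ⁻¹`.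
-/

/-- The extended binomial coefficient `binom(k,n)_f`: the sum, over all
`k`-tuples `(π₁,…,π_k)` of nonnegative integers with `π₁ + ⋯ + π_k = n`,
of the products `f(π₁)⋯f(π_k)`. It counts the `f`-weighted integer
compositions of `n` with exactly `k` parts. -/
def extBinom (f : ℕ → ℕ) (k n : ℕ) : ℕ :=
  ∑ π ∈ Finset.Nat.antidiagonalTuple k n, ∏ i, f (π i)

open Finset PowerSeries

namespace PowerSeries

variable {R : Type*} [CommSemiring R]

theorem coeff_X_mul_derivative (φ : R⟦X⟧) (n : ℕ) :
    coeff n (X * d⁄dX R φ) = n * coeff n φ := by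
  cases n with
  | zero => simp
  | succ n => rw [coeff_succ_X_mul, coeff_derivative, mul_comm]; push_cast; rfl

theorem nsmul_X_mul_derivative_pow_mul_pow (φ : R⟦X⟧) (i b : ℕ) :
    (i + b) • (X * d⁄dX R (φ ^ i) * φ ^ b) = i • (X * d⁄dX R (φ ^ (i + b))) := by
  cases i with
  | zero => simp
  | succ i =>
    simp only [derivative_pow, nsmul_eq_mul, Nat.add_sub_cancel, Nat.cast_add, Nat.cast_one,
      show i + 1 + b - 1 = i + b by omega]
    ring

end PowerSeries

theorem extBinom_eq_coeff_pow (f : ℕ → ℕ) (k n : ℕ) :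
    extBinom f k n = coeff n (mk (fun m ↦ f m) ^ k) := by
  rw [← Fin.prod_const, coeff_prod, extBinom]
  exact (sum_equiv Finsupp.equivFunOnFinite (by simp [Nat.mem_antidiagonalTuple])
    (by simp)).symm

theorem extBinom_absorption_general (f : ℕ → ℕ) (k n i : ℕ) (hik : i ≤ k) :
    i * n * extBinom f k n =
      k * ∑ s ∈ Finset.range (n + 1),
        s * extBinom f i s * extBinom f (k - i) (n - s) := by
  obtain ⟨b, rfl⟩ := Nat.exists_eq_add_of_le hik
  set P : ℕ⟦X⟧ := mk fun m ↦ f m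
  have hsum : ∑ s ∈ range (n + 1), s * extBinom f i s * extBinom f b (n - s) =
      coeff n (X * d⁄dX ℕ (P ^ i) * P ^ b) := by
    rw [coeff_mul, Nat.sum_antidiagonal_eq_sum_range_succ_mk]
    simp only [coeff_X_mul_derivative, extBinom_eq_coeff_pow, Nat.cast_id, P]
  have key := congrArg (coeff n) (nsmul_X_mul_derivative_pow_mul_pow P i b)
  rw [map_nsmul, map_nsmul, coeff_X_mul_derivative, ← extBinom_eq_coeff_pow, smul_eq_mul,
    smul_eq_mul, Nat.cast_id] at key
  rw [Nat.add_sub_cancel_left, hsum, key, mul_assoc]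

theorem extBinom_absorption (f : ℕ → ℕ) (k n i : ℕ) (hi : 0 < i) (hik : i ≤ k) :
    i * n * extBinom f k n =
      k * ∑ s ∈ Finset.range (n + 1),
        s * extBinom f i s * extBinom f (k - i) (n - s) :=
  extBinom_absorption_general f k n i hik
end

section
/- (Parity of extended binomial coefficients) For every f : ℕ → ℕ and all k, n ∈ ℕ: if k is even and n is odd then binom(k,n)_f ≡ 0 (mod 2); if k is even and n is even then binom(k,n)_f ≡ binom(k/2, n/2)_f (mod 2); and if k is odd then binom(k,n)_f ≡ ∑_{s=0}^{⌊n/2⌋} f(2s + p(n)) · binom(⌊k/2⌋, ⌊n/2⌋ − s)_f (mod 2), where p(n) = 0 if n is even and p(n) = 1 if n is odd. -/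
/-!
Over `𝔽_p`, `binom(k,n)_f` is the coefficient of `X^n` in `F^k`, where `F = ∑ f(i) X^i`.
Frobenius gives `F^(p*m) = (F^m)(X^p)` in `𝔽_p⟦X⟧`, so for `p = 2` the coefficients of `F^(2m)`
vanish in odd degree and are those of `F^m` in even degree, and multiplying by one more factor
`F` produces the convolution in the odd case.
-/

open PowerSeries Finset

theorem PowerSeries.coeff_pow_eq_sum_antidiagonalTuple {R : Type*} [CommSemiring R]
    (φ : R⟦X⟧) (k n : ℕ) :
    coeff n (φ ^ k) = ∑ π ∈ Nat.antidiagonalTuple k n, ∏ i, coeff (π i) φ := by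
  rw [← Fin.prod_const, coeff_prod, finsuppAntidiag, sum_map,
    ← piAntidiag_univ_fin_eq_antidiagonalTuple, ← sum_attach (piAntidiag univ n)]
  rfl

theorem PowerSeries.coeff_mul_expand_two {R : Type*} [CommRing R] (φ ψ : R⟦X⟧) (n : ℕ) :
    coeff n (φ * expand 2 two_ne_zero ψ) =
      ∑ s ∈ range (n / 2 + 1), coeff (2 * s + n % 2) φ * coeff (n / 2 - s) ψ := by
  rw [coeff_mul, ← Nat.sum_antidiagonal_eq_sum_range_succ
    (fun s t => coeff (2 * s + n % 2) φ * coeff t ψ)]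
  simp_rw [coeff_expand, mul_ite, mul_zero]
  rw [← sum_filter]
  refine sum_nbij' (fun p => (p.1 / 2, p.2 / 2)) (fun q => (2 * q.1 + n % 2, 2 * q.2))
    ?_ ?_ ?_ ?_ ?_ <;>
    simp only [mem_filter, HasAntidiagonal.mem_antidiagonal, Prod.forall, Prod.mk.injEq, and_imp]
  iterate 4 · intros; omega
  · intro a b hab hb
    rw [show 2 * (a / 2) + n % 2 = a by omega]

theorem ZMod.powerSeries_expand_card (p : ℕ) [Fact p.Prime] (φ : (ZMod p)⟦X⟧) :
    expand p (NeZero.ne p) φ = φ ^ p := by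
  rw [← MvPowerSeries.map_frobenius_expand p (NeZero.ne p) (R := ZMod p), ZMod.frobenius_zmod,
    MvPowerSeries.map_id]
  rfl

theorem natCast_extBinom {R : Type*} [CommSemiring R] (f : ℕ → ℕ) (k n : ℕ) :
    (extBinom f k n : R) = coeff n (mk (fun i => (f i : R)) ^ k) := by
  simp [extBinom, coeff_pow_eq_sum_antidiagonalTuple]

theorem natCast_extBinom_prime_mul (p : ℕ) [Fact p.Prime] (f : ℕ → ℕ) (m n : ℕ) :
    (extBinom f (p * m) n : ZMod p) = if p ∣ n then (extBinom f m (n / p) : ZMod p) else 0 := by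
  rw [natCast_extBinom, natCast_extBinom, pow_mul', ← ZMod.powerSeries_expand_card, coeff_expand]

theorem natCast_extBinom_two_mul_add_one (f : ℕ → ℕ) (m n : ℕ) :
    (extBinom f (2 * m + 1) n : ZMod 2) =
      ∑ s ∈ range (n / 2 + 1), (f (2 * s + n % 2) * extBinom f m (n / 2 - s) : ℕ) := by
  rw [natCast_extBinom, pow_succ', pow_mul', ← ZMod.powerSeries_expand_card, coeff_mul_expand_two]
  simp [natCast_extBinom]

theorem extBinom_parity (f : ℕ → ℕ) (k n : ℕ) :
    (Even k → Odd n → extBinom f k n ≡ 0 [MOD 2]) ∧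
    (Even k → Even n → extBinom f k n ≡ extBinom f (k / 2) (n / 2) [MOD 2]) ∧
    (Odd k → extBinom f k n ≡
      ∑ s ∈ Finset.range (n / 2 + 1),
        f (2 * s + n % 2) * extBinom f (k / 2) (n / 2 - s) [MOD 2]) := by
  refine ⟨fun hk hn => ?_, fun hk hn => ?_, fun hk => ?_⟩ <;> rw [← ZMod.natCast_eq_natCast_iff]
  · obtain ⟨m, rfl⟩ := hk.two_dvd
    rw [natCast_extBinom_prime_mul, if_neg (Nat.not_even_iff_odd.mpr hn ∘ even_iff_two_dvd.mpr),
      Nat.cast_zero]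
  · obtain ⟨m, rfl⟩ := hk.two_dvd
    rw [natCast_extBinom_prime_mul, if_pos hn.two_dvd, Nat.mul_div_cancel_left m two_pos]
  · obtain ⟨m, rfl⟩ := hk
    rw [natCast_extBinom_two_mul_add_one, show (2 * m + 1) / 2 = m by omega, Nat.cast_sum]
end

section
/- Let p be a prime and f : ℕ → ℕ. For every n ∈ ℕ: if n = p·r for some r ∈ ℕ then binom(p,n)_f ≡ f(r) (mod p), and otherwise binom(p,n)_f ≡ 0 (mod p). -/
open Finset PowerSeries

theorem extBinom_zero_left (f : ℕ → ℕ) (n : ℕ) : extBinom f 0 n = if n = 0 then 1 else 0 := by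
  cases n <;> simp [extBinom]

theorem extBinom_succ_left (f : ℕ → ℕ) (k n : ℕ) :
    extBinom f (k + 1) n = ∑ ab ∈ antidiagonal n, f ab.1 * extBinom f k ab.2 := by
  simp only [extBinom, mul_sum]
  rw [sum_sigma']
  refine sum_nbij' (fun π => ⟨(π 0, ∑ i, Fin.tail π i), Fin.tail π⟩)
    (fun x => Fin.cons x.1.1 x.2) ?_ ?_ (fun π _ => Fin.cons_self_tail π) ?_ ?_
  · intro π hπ
    simp only [mem_sigma, HasAntidiagonal.mem_antidiagonal, Nat.mem_antidiagonalTuple] at hπ ⊢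
    rw [← hπ, Fin.sum_univ_succ]
    exact ⟨rfl, trivial⟩
  · rintro ⟨⟨a, b⟩, x⟩ hx
    simp only [mem_sigma, HasAntidiagonal.mem_antidiagonal, Nat.mem_antidiagonalTuple] at hx ⊢
    rw [Fin.sum_cons, hx.2, hx.1]
  · rintro ⟨⟨a, b⟩, x⟩ hx
    simp only [mem_sigma, HasAntidiagonal.mem_antidiagonal, Nat.mem_antidiagonalTuple] at hx
    simp [hx.2]
  · intro π _
    rw [Fin.prod_univ_succ]
    rfl

theorem coeff_mk_pow_eq_extBinom {R : Type*} [CommSemiring R] (f : ℕ → ℕ) (k n : ℕ) :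
    coeff n (mk (fun i => (f i : R)) ^ k) = extBinom f k n := by
  induction k generalizing n with
  | zero => simp [extBinom_zero_left, coeff_one]
  | succ k ih => simp [pow_succ', coeff_mul, extBinom_succ_left, ih]

theorem PowerSeries.coeff_pow_expChar {R : Type*} [CommRing R] (p : ℕ) [ExpChar R p]
    (φ : PowerSeries R) (n : ℕ) :
    coeff n (φ ^ p) = if p ∣ n then coeff (n / p) φ ^ p else 0 := by
  have hp := expChar_ne_zero R p
  have frobenius_eq : φ ^ p = expand p hp (map (frobenius R p) φ) :=
    (MvPowerSeries.map_frobenius_expand p hp).symm.trans (MvPowerSeries.map_expand _ _ _ _)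
  rw [frobenius_eq, coeff_expand, coeff_map, frobenius_def]

theorem extBinom_prime_cast_zmod (p : ℕ) [Fact p.Prime] (f : ℕ → ℕ) (n : ℕ) :
    (extBinom f p n : ZMod p) = if p ∣ n then (f (n / p) : ZMod p) else 0 := by
  rw [← coeff_mk_pow_eq_extBinom, coeff_pow_expChar, coeff_mk, ZMod.pow_card]

theorem extBinom_prime_row (p : ℕ) (hp : p.Prime) (f : ℕ → ℕ) (n : ℕ) :
    (∀ r, n = p * r → extBinom f p n ≡ f r [MOD p]) ∧
    ((¬ ∃ r, n = p * r) → extBinom f p n ≡ 0 [MOD p]) := by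
  have := Fact.mk hp
  refine ⟨fun r hr => ?_, fun hn => ?_⟩ <;>
    rw [← ZMod.natCast_eq_natCast_iff, extBinom_prime_cast_zmod]
  · rw [if_pos (Dvd.intro r hr.symm), hr, Nat.mul_div_cancel_left r hp.pos]
  · rw [if_neg (show ¬p ∣ n from hn), Nat.cast_zero]
end

section
/- Let p be a prime, m ≥ 1 an integer, and f : ℕ → ℕ. For every n ∈ ℕ: if n = p^m · r for some r ∈ ℕ then binom(p^m, n)_f ≡ f(r) (mod p), and otherwise binom(p^m, n)_f ≡ 0 (mod p). -/
open Polynomial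

namespace Finset.Nat

theorem sum_antidiagonalTuple_succ {M : Type*} [AddCommMonoid M] (k n : ℕ)
    (g : (Fin (k + 1) → ℕ) → M) :
    ∑ π ∈ antidiagonalTuple (k + 1) n, g π =
      ∑ ab ∈ antidiagonal n, ∑ π ∈ antidiagonalTuple k ab.2, g (Fin.cons ab.1 π) := by
  rw [Finset.sum_sigma']
  refine Finset.sum_bij' (fun π _ => ⟨(π 0, ∑ i, Fin.tail π i), Fin.tail π⟩)
    (fun x _ => Fin.cons x.1.1 x.2) ?_ ?_ ?_ ?_ ?_
  · intro π hπ
    rw [mem_antidiagonalTuple, Fin.sum_univ_succ] at hπ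
    simpa [mem_antidiagonalTuple, Fin.tail] using hπ
  · rintro ⟨⟨a, b⟩, π⟩ hx
    simp only [Finset.mem_sigma, HasAntidiagonal.mem_antidiagonal, mem_antidiagonalTuple] at hx
    rw [mem_antidiagonalTuple, Fin.sum_cons, hx.2, hx.1]
  · exact fun π _ => Fin.cons_self_tail π
  · rintro ⟨⟨a, b⟩, π⟩ hx
    simp only [Finset.mem_sigma, mem_antidiagonalTuple] at hx
    simp [hx.2]
  · exact fun π _ => by rw [Fin.cons_self_tail]

end Finset.Nat

namespace Polynomial

theorem coeff_pow_eq_sum_antidiagonalTuple {R : Type*} [CommSemiring R] (φ : R[X]) (k n : ℕ) :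
    (φ ^ k).coeff n = ∑ π ∈ Finset.Nat.antidiagonalTuple k n, ∏ i, φ.coeff (π i) := by
  induction k generalizing n with
  | zero => cases n <;> simp [coeff_one]
  | succ k ih =>
    rw [pow_succ', coeff_mul, Finset.Nat.sum_antidiagonalTuple_succ]
    refine Finset.sum_congr rfl fun ab _ => ?_
    simp [ih, Finset.mul_sum, Fin.prod_univ_succ]

end Polynomial

theorem ZMod.expand_card_pow {p : ℕ} [Fact p.Prime] (φ : (ZMod p)[X]) (m : ℕ) :
    expand (ZMod p) (p ^ m) φ = φ ^ p ^ m := by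
  have hfrob : iterateFrobenius (ZMod p) p m = RingHom.id _ :=
    RingHom.ext fun x => (iterateFrobenius_def p m x).trans (ZMod.pow_card_pow x)
  rw [← map_iterateFrobenius_expand, hfrob, map_id]

theorem extBinom_cast_eq_coeff_pow_trunc {R : Type*} [CommSemiring R] (f : ℕ → ℕ) (k n : ℕ) :
    (extBinom f k n : R) =
      ((PowerSeries.trunc (n + 1) (PowerSeries.mk fun i => (f i : R))) ^ k).coeff n := by
  rw [coeff_pow_eq_sum_antidiagonalTuple, extBinom]
  push_cast
  refine Finset.sum_congr rfl fun π hπ => Finset.prod_congr rfl fun i _ => ?_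
  have hle : π i ≤ n :=
    Finset.Nat.mem_antidiagonalTuple.mp hπ ▸ Finset.single_le_sum (by simp) (Finset.mem_univ i)
  rw [PowerSeries.coeff_trunc, if_pos (Nat.lt_succ_of_le hle), PowerSeries.coeff_mk]

theorem extBinom_prime_pow_cast {p : ℕ} [Fact p.Prime] (f : ℕ → ℕ) (m n : ℕ) :
    (extBinom f (p ^ m) n : ZMod p) = if p ^ m ∣ n then (f (n / p ^ m) : ZMod p) else 0 := by
  have hpos : 0 < p ^ m := pow_pos (Fact.out : p.Prime).pos m
  rw [extBinom_cast_eq_coeff_pow_trunc, ← ZMod.expand_card_pow, coeff_expand hpos]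
  split_ifs
  · rw [PowerSeries.coeff_trunc, if_pos (Nat.lt_succ_of_le (Nat.div_le_self n _)),
      PowerSeries.coeff_mk]
  · rfl

theorem extBinom_prime_pow_row_general (p : ℕ) (hp : p.Prime) (m : ℕ)
    (f : ℕ → ℕ) (n : ℕ) :
    (∀ r, n = p ^ m * r → extBinom f (p ^ m) n ≡ f r [MOD p]) ∧
    ((¬ ∃ r, n = p ^ m * r) → extBinom f (p ^ m) n ≡ 0 [MOD p]) := by
  have := Fact.mk hp
  constructor
  · rintro r rfl
    rw [← ZMod.natCast_eq_natCast_iff, extBinom_prime_pow_cast, if_pos (dvd_mul_right _ _),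
      Nat.mul_div_cancel_left r (pow_pos hp.pos m)]
  · intro hndvd
    rw [← ZMod.natCast_eq_natCast_iff, extBinom_prime_pow_cast, if_neg (by exact hndvd),
      Nat.cast_zero]

theorem extBinom_prime_pow_row (p : ℕ) (hp : p.Prime) (m : ℕ) (hm : 1 ≤ m)
    (f : ℕ → ℕ) (n : ℕ) :
    (∀ r, n = p ^ m * r → extBinom f (p ^ m) n ≡ f r [MOD p]) ∧
    ((¬ ∃ r, n = p ^ m * r) → extBinom f (p ^ m) n ≡ 0 [MOD p]) :=
  extBinom_prime_pow_row_general p hp m f n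
end

section
/- For every f : ℕ → ℕ, every m ∈ ℕ, every k ≥ 1, and every n ∈ ℕ, the quantity k / gcd(k, n) divides binom(m·k, n)_f. -/
lemma extBinom_key (f : ℕ → ℕ) (K n : ℕ) : K ∣ n * extBinom f K n := by
  classical
  rcases Nat.eq_zero_or_pos K with hK | hK
  · subst hK
    rcases Nat.eq_zero_or_pos n with hn | hn
    · simp [hn]
    · obtain ⟨n', rfl⟩ := Nat.exists_eq_add_of_lt hn
      simp [extBinom, Finset.Nat.antidiagonalTuple_zero_succ]
  · set A := Finset.Nat.antidiagonalTuple K n with hA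
    have i0 : Fin K := ⟨0, hK⟩
    have h1 : n * extBinom f K n = ∑ π ∈ A, (∑ i, π i) * ∏ i, f (π i) := by
      rw [extBinom, Finset.mul_sum]
      refine Finset.sum_congr rfl fun π hπ => ?_
      rw [Finset.Nat.mem_antidiagonalTuple.mp hπ]
    have hS : ∀ i : Fin K,
        (∑ π ∈ A, π i * ∏ j, f (π j)) = ∑ π ∈ A, π i0 * ∏ j, f (π j) := by
      intro i
      set σ := Equiv.swap i i0 with hσ
      refine Finset.sum_nbij' (fun π => π ∘ σ) (fun π => π ∘ σ) ?_ ?_ ?_ ?_ ?_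
      · intro π hπ
        rw [hA, Finset.Nat.mem_antidiagonalTuple] at hπ ⊢
        rw [← hπ]
        exact Equiv.sum_comp σ π
      · intro π hπ
        rw [hA, Finset.Nat.mem_antidiagonalTuple] at hπ ⊢
        rw [← hπ]
        exact Equiv.sum_comp σ π
      · intro π _
        funext j
        simp [Function.comp, hσ, Equiv.swap_apply_self]
      · intro π _
        funext j
        simp [Function.comp, hσ, Equiv.swap_apply_self]
      · intro π _
        have h2 : (∏ j, f ((π ∘ σ) j)) = ∏ j, f (π j) := Equiv.prod_comp σ (fun j => f (π j))
        have h3 : (π ∘ σ) i0 = π i := by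
          simp [Function.comp, hσ, Equiv.swap_apply_right]
        show π i * ∏ j, f (π j) = (π ∘ σ) i0 * ∏ j, f ((π ∘ σ) j)
        rw [h2, h3]
    have h2 : n * extBinom f K n = K * ∑ π ∈ A, π i0 * ∏ j, f (π j) := by
      rw [h1]
      have : ∑ π ∈ A, (∑ i, π i) * ∏ i, f (π i)
          = ∑ i : Fin K, ∑ π ∈ A, π i * ∏ j, f (π j) := by
        rw [Finset.sum_comm]
        exact Finset.sum_congr rfl fun π _ => Finset.sum_mul _ _ _
      rw [this, Finset.sum_congr rfl fun i _ => hS i, Finset.sum_const, Finset.card_univ,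
        Fintype.card_fin, smul_eq_mul]
    exact ⟨_, h2⟩

theorem extBinom_div_gcd_dvd (f : ℕ → ℕ) (m k n : ℕ) (hk : 1 ≤ k) :
    (k / Nat.gcd k n) ∣ extBinom f (m * k) n := by
  rcases Nat.eq_zero_or_pos m with hm | hm
  · subst hm
    rcases Nat.eq_zero_or_pos n with hn | hn
    · subst hn
      simp [Nat.gcd_zero_right, Nat.div_self (Nat.lt_of_lt_of_le Nat.zero_lt_one hk)]
    · obtain ⟨n', rfl⟩ := Nat.exists_eq_add_of_lt hn
      have hz : extBinom f (0 * k) (n' + 1) = 0 := by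
        rw [zero_mul]
        simp [extBinom, Finset.Nat.antidiagonalTuple_zero_succ]
      rw [show (0:ℕ) + n' + 1 = n' + 1 by omega, hz]
      exact dvd_zero _
  · have hkey : (m * k) ∣ n * extBinom f (m * k) n := extBinom_key f (m * k) n
    have hkd : k ∣ n * extBinom f (m * k) n := dvd_trans (dvd_mul_left k m) hkey
    set g := Nat.gcd k n with hg
    have hgpos : 0 < g := Nat.gcd_pos_of_pos_left n (Nat.lt_of_lt_of_le Nat.zero_lt_one hk)
    have hk' : g * (k / g) = k := Nat.mul_div_cancel' (Nat.gcd_dvd_left k n)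
    have hn' : g * (n / g) = n := Nat.mul_div_cancel' (Nat.gcd_dvd_right k n)
    have hco : Nat.Coprime (k / g) (n / g) :=
      Nat.coprime_div_gcd_div_gcd hgpos
    have : k / g ∣ (n / g) * extBinom f (m * k) n := by
      have h4 : g * (k / g) ∣ g * ((n / g) * extBinom f (m * k) n) := by
        rw [hk', ← mul_assoc, hn']; exact hkd
      exact (Nat.mul_dvd_mul_iff_left hgpos).mp h4
    exact hco.dvd_of_dvd_mul_left this
end

section
/- Let p be a prime, r ≥ 1 an integer, and f : ℕ → ℕ. Then binom(p·r, p)_f ≡ f(0)^{p·(r−1)} · f(1)^p · C(p·r, p) (mod p·r), where C(p·r, p) denotes the ordinary binomial coefficient. -/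
open Finset

namespace AddAction

theorem card_dvd_sum_of_stabilizer_eq_bot {G α R : Type*} [AddGroup G] [Finite G]
    [AddAction G α] [CommSemiring R] {s : Finset α} (hs : ∀ g : G, ∀ x ∈ s, g +ᵥ x ∈ s)
    (hfree : ∀ x ∈ s, stabilizer G x = ⊥) {w : α → R} (hw : ∀ (g : G) x, w (g +ᵥ x) = w x) :
    (Nat.card G : R) ∣ ∑ x ∈ s, w x := by
  classical
  have := Fintype.ofFinite G
  rw [← sum_fiberwise_of_maps_to fun x hx => mem_image_of_mem (orbit G) hx]
  refine dvd_sum fun o ho => ?_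
  obtain ⟨x, hx, rfl⟩ := mem_image.mp ho
  have hfiber : {y ∈ s | orbit G y = orbit G x} = univ.image (· +ᵥ x : G → α) := by
    ext y
    simp only [mem_filter, mem_image, mem_univ, true_and, orbit_eq_iff, mem_orbit_iff]
    exact ⟨And.right, fun ⟨g, hg⟩ => ⟨hg ▸ hs g x hx, g, hg⟩⟩
  have hinj : Function.Injective (· +ᵥ x : G → α) := by
    intro g h hgh
    have : -h + g ∈ stabilizer G x := by
      simp only [mem_stabilizer_iff, add_vadd] at hgh ⊢
      rw [hgh, neg_vadd_vadd]
    rw [hfree x hx, AddSubgroup.mem_bot] at this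
    exact (neg_add_eq_zero.mp this).symm
  rw [hfiber, sum_image fun g _ h _ hgh => hinj hgh]
  simp [hw, Nat.card_eq_fintype_card]

end AddAction

section ZeroOneTuples

variable {ι : Type*} [Fintype ι]

theorem sum_eq_card_filter_eq_one {π : ι → ℕ} (hπ : ∀ i, π i ≤ 1) :
    ∑ i, π i = #{i | π i = 1} := by
  rw [card_filter]
  exact sum_congr rfl fun i _ => by have := hπ i; split_ifs <;> omega

theorem prod_comp_eq_pow_mul_pow_of_le_one {M : Type*} [CommMonoid M] (f : ℕ → M) {π : ι → ℕ}
    (hπ : ∀ i, π i ≤ 1) :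
    ∏ i, f (π i) = f 0 ^ (Fintype.card ι - ∑ i, π i) * f 1 ^ ∑ i, π i := by
  have hf : ∀ i, f (π i) = if π i = 1 then f 1 else f 0 := fun i => by
    have := hπ i; split_ifs with h <;> congr 1; omega
  have hcard := card_filter_add_card_filter_not (s := univ) (fun i => π i = 1)
  rw [Fintype.prod_congr _ _ hf, prod_ite, prod_const, prod_const, sum_eq_card_filter_eq_one hπ,
    ← card_univ, mul_comm, ← hcard, Nat.add_sub_cancel_left]

theorem card_filter_piAntidiag_le_one [DecidableEq ι] (k : ℕ) :
    #{π ∈ piAntidiag (univ : Finset ι) k | ∀ i, π i ≤ 1} = (Fintype.card ι).choose k := by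
  rw [← card_univ, ← card_powersetCard]
  refine card_nbij' (fun π => ({i | π i = 1} : Finset ι)) (fun s i => if i ∈ s then 1 else 0)
    ?_ ?_ ?_ ?_
  · intro π hπ
    simp only [coe_filter, mem_piAntidiag] at hπ
    simp [mem_powersetCard, ← sum_eq_card_filter_eq_one hπ.2, hπ.1.1]
  · intro s hs
    simp only [mem_coe, mem_powersetCard, subset_univ, true_and] at hs
    simp only [mem_coe, mem_filter, mem_piAntidiag, mem_univ, implies_true, and_true]
    refine ⟨by simp [hs], fun i => ?_⟩
    split_ifs <;> simp
  · intro π hπ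
    simp only [coe_filter] at hπ
    funext i
    have := hπ.2 i
    simp only [mem_filter, mem_univ, true_and]
    split_ifs <;> omega
  · intro s _
    ext i
    simp

end ZeroOneTuples

theorem extBinom_eq_sum_piAntidiag (f : ℕ → ℕ) (k n : ℕ) :
    extBinom f k n = ∑ π ∈ piAntidiag (univ : Finset (Fin k)) n, ∏ i, f (π i) := by
  rw [extBinom, piAntidiag_univ_fin_eq_antidiagonalTuple]

theorem extBinom_indicator_le_one (k n : ℕ) :
    extBinom (fun m => if m ≤ 1 then 1 else 0) k n = k.choose n := by
  have h := card_filter_piAntidiag_le_one (ι := Fin k) n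
  rw [Fintype.card_fin] at h
  rw [extBinom_eq_sum_piAntidiag, ← h, card_filter]
  exact sum_congr rfl fun π _ => Fintype.prod_boole

section Translation

open AddAction

variable {G : Type*} [AddCommGroup G]

/-- Not a global instance: for `α` carrying its own `G`-action it would clash with the pointwise
action on `G → α`. -/
abbrev translateAction (α : Type*) : AddAction G (G → α) where
  vadd g π i := π (g + i)
  zero_vadd π := funext fun i => congrArg π (zero_add i)
  add_vadd g h π := funext fun i => congrArg π (by rw [add_assoc, add_left_comm])

attribute [local instance] translateAction

variable [Fintype G]

theorem le_one_of_stabilizer_ne_bot {p : ℕ} (hp : p.Prime) {π : G → ℕ}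
    (hπ : ∑ i, π i = p) (hstab : stabilizer G π ≠ ⊥) (i : G) : π i ≤ 1 := by
  set H := stabilizer G π
  have hinv : ∀ h : H, ∀ j, π (h + j) = π j := fun h => congrFun (mem_stabilizer_iff.mp h.2)
  have hdvd : Nat.card H ∣ p := by
    simpa [hπ] using card_dvd_sum_of_stabilizer_eq_bot (s := univ) (w := π) (by simp)
      (fun j _ => IsCancelVAdd.stabilizer_eq_bot j) hinv
  have hcard : Nat.card H = p := (hp.eq_one_or_self_of_dvd _ hdvd).resolve_left
    (H.one_lt_card_iff_ne_bot.mpr hstab).ne'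
  have hle : p * π i ≤ p * 1 := calc
    p * π i = ∑ h : H, π (h + i) := by simp [hinv, ← hcard, Nat.card_eq_fintype_card]
    _ = ∑ j ∈ univ.map ⟨fun h : H => h + i, (add_left_injective i).comp Subtype.val_injective⟩,
        π j := by rw [sum_map]; rfl
    _ ≤ ∑ j, π j := sum_le_sum_of_subset (subset_univ _)
    _ = p * 1 := by rw [hπ, mul_one]
  exact Nat.le_of_mul_le_mul_left hle hp.pos

open Classical in
theorem sum_piAntidiag_prod_modEq_card_mul [DecidableEq G] {p : ℕ} (hp : p.Prime) (f : ℕ → ℕ) :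
    ∑ π ∈ piAntidiag (univ : Finset G) p, ∏ i, f (π i) ≡
      #{π ∈ piAntidiag (univ : Finset G) p | stabilizer G π ≠ ⊥} *
        (f 0 ^ (Fintype.card G - p) * f 1 ^ p) [MOD Fintype.card G] := by
  set A := piAntidiag (univ : Finset G) p
  have hA : ∀ g : G, ∀ π ∈ A, g +ᵥ π ∈ A := fun g π hπ => by
    have hsum : ∑ i, (g +ᵥ π) i = ∑ i, π i := Equiv.sum_comp (Equiv.addLeft g) π
    simpa [A, mem_piAntidiag, hsum] using hπ
  have hfree : Fintype.card G ∣ ∑ π ∈ A with stabilizer G π = ⊥, ∏ i, f (π i) := by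
    rw [← Nat.card_eq_fintype_card]
    refine card_dvd_sum_of_stabilizer_eq_bot (fun g π hπ => ?_) (fun π hπ => (mem_filter.mp hπ).2)
      fun g π => Equiv.prod_comp (Equiv.addLeft g) fun i => f (π i)
    obtain ⟨hπA, hπfree⟩ := mem_filter.mp hπ
    exact mem_filter.mpr ⟨hA g π hπA, (stabilizer_vadd_eq_right (G := G) g π).trans hπfree⟩
  have hsym : ∑ π ∈ A with stabilizer G π ≠ ⊥, ∏ i, f (π i) =
      #{π ∈ A | stabilizer G π ≠ ⊥} * (f 0 ^ (Fintype.card G - p) * f 1 ^ p) := by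
    refine sum_const_nat fun π hπ => ?_
    obtain ⟨hπA, hstab⟩ := mem_filter.mp hπ
    have hsum : ∑ i, π i = p := (mem_piAntidiag.mp hπA).1
    rw [prod_comp_eq_pow_mul_pow_of_le_one f (le_one_of_stabilizer_ne_bot hp hsum hstab), hsum]
  rw [← sum_filter_add_sum_filter_not A (stabilizer G · = ⊥), hsym]
  exact Nat.add_modEq_right_iff.mpr hfree

end Translation

theorem extBinom_mann_shanks_general (p : ℕ) (hp : p.Prime) (r : ℕ)
    (f : ℕ → ℕ) :
    extBinom f (p * r) p ≡
      f 0 ^ (p * (r - 1)) * f 1 ^ p * Nat.choose (p * r) p [MOD p * r] := by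
  rcases r.eq_zero_or_pos with rfl | hr
  · obtain ⟨q, rfl⟩ := Nat.exists_eq_add_one_of_ne_zero hp.ne_zero
    simp [extBinom, Nat.antidiagonalTuple_zero_succ]
  have : NeZero (p * r) := ⟨(Nat.mul_pos hp.pos hr).ne'⟩
  have hmod (g : ℕ → ℕ) := sum_piAntidiag_prod_modEq_card_mul (G := Fin (p * r)) hp g
  simp only [← extBinom_eq_sum_piAntidiag, Fintype.card_fin] at hmod
  have hchoose := hmod fun m => if m ≤ 1 then 1 else 0
  rw [extBinom_indicator_le_one] at hchoose
  rw [Nat.mul_sub_one]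
  calc extBinom f (p * r) p ≡ _ [MOD p * r] := hmod f
    _ ≡ (p * r).choose p * (f 0 ^ (p * r - p) * f 1 ^ p) [MOD p * r] :=
      Nat.ModEq.mul_right _ (by simpa using hchoose.symm)
    _ = f 0 ^ (p * r - p) * f 1 ^ p * (p * r).choose p := mul_comm _ _

theorem extBinom_mann_shanks (p : ℕ) (hp : p.Prime) (r : ℕ) (hr : 1 ≤ r)
    (f : ℕ → ℕ) :
    extBinom f (p * r) p ≡
      f 0 ^ (p * (r - 1)) * f 1 ^ p * Nat.choose (p * r) p [MOD p * r] :=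
  extBinom_mann_shanks_general p hp r f
end

section
/- Let p be a prime and f : ℕ → ℕ. For all k, n ∈ ℕ, writing n₀ = n mod p and k₀ = k mod p, one has binom(k,n)_f ≡ ∑_{m=0}^{⌊n/p⌋} binom(⌊k/p⌋, ⌊n/p⌋ − m)_f · binom(k₀, n₀ + m·p)_f (mod p). -/
open Finset PowerSeries

theorem Finset.sum_finsuppAntidiag_univ_fin {M : Type*} [AddCommMonoid M] (k n : ℕ)
    (g : (Fin k → ℕ) → M) :
    ∑ l ∈ finsuppAntidiag univ n, g l = ∑ π ∈ Nat.antidiagonalTuple k n, g π := by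
  rw [finsuppAntidiag, sum_map, ← piAntidiag_univ_fin_eq_antidiagonalTuple]
  exact sum_attach _ g

theorem Finset.sum_range_succ_filter_dvd {M : Type*} [AddCommMonoid M] {p : ℕ} (hp : 0 < p)
    (n : ℕ) (g : ℕ → M) :
    ∑ a ∈ range (n + 1) with p ∣ a, g a = ∑ j ∈ range (n / p + 1), g (p * j) := by
  have hmultiples : {a ∈ range (n + 1) | p ∣ a} =
      (range (n / p + 1)).map ⟨(p * ·), mul_right_injective₀ hp.ne'⟩ := by
    ext a
    simp only [mem_filter, mem_range, mem_map, Function.Embedding.coeFn_mk, Nat.lt_succ_iff,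
      Nat.le_div_iff_mul_le hp]
    constructor
    · rintro ⟨ha, j, rfl⟩
      exact ⟨j, by rwa [mul_comm], rfl⟩
    · rintro ⟨j, hj, rfl⟩
      exact ⟨by rwa [mul_comm], dvd_mul_right p j⟩
  rw [hmultiples, sum_map]
  rfl

namespace PowerSeries

theorem map_frobenius_expand {R : Type*} [CommRing R] (p : ℕ) (hp : p ≠ 0) [ExpChar R p]
    (φ : R⟦X⟧) : map (frobenius R p) (expand p hp φ) = φ ^ p :=
  MvPowerSeries.map_frobenius_expand (f := φ) p hp

theorem expand_eq_pow_of_zmod (p : ℕ) [Fact p.Prime] (φ : (ZMod p)⟦X⟧) :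
    expand p (NeZero.ne p) φ = φ ^ p := by
  rw [← map_frobenius_expand, ZMod.frobenius_zmod, map_id, id]

theorem coeff_expand_mul_eq_sum {R : Type*} [CommRing R] (p : ℕ) (hp : p ≠ 0) (φ ψ : R⟦X⟧)
    (n : ℕ) :
    coeff n (expand p hp φ * ψ) =
      ∑ m ∈ range (n / p + 1), coeff (n / p - m) φ * coeff (n % p + m * p) ψ := by
  have hp' : 0 < p := Nat.pos_of_ne_zero hp
  have hreindex : ∀ m ≤ n / p, n - p * (n / p - m) = n % p + m * p := by
    intro m hm
    have := Nat.div_add_mod n p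
    have := Nat.mul_le_mul_left p hm
    rw [Nat.mul_sub, mul_comm m p]
    omega
  calc coeff n (expand p hp φ * ψ)
      = ∑ a ∈ range (n + 1), coeff a (expand p hp φ) * coeff (n - a) ψ := by
        rw [coeff_mul, Nat.sum_antidiagonal_eq_sum_range_succ (fun a b => coeff a _ * coeff b ψ)]
    _ = ∑ a ∈ range (n + 1) with p ∣ a, coeff (a / p) φ * coeff (n - a) ψ := by
        simp only [coeff_expand, ite_mul, zero_mul, sum_filter]
    _ = ∑ j ∈ range (n / p + 1), coeff j φ * coeff (n - p * j) ψ := by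
        rw [sum_range_succ_filter_dvd hp']
        simp only [Nat.mul_div_cancel_left _ hp']
    _ = ∑ m ∈ range (n / p + 1), coeff (n / p - m) φ * coeff (n % p + m * p) ψ := by
        rw [← sum_range_reflect]
        refine sum_congr rfl fun m hm => ?_
        rw [Nat.add_sub_cancel, hreindex m (Nat.lt_succ_iff.1 (mem_range.1 hm))]

end PowerSeries

section WeightSeries

variable (R : Type*) [CommSemiring R]

def weightSeries (f : ℕ → ℕ) : R⟦X⟧ := PowerSeries.mk fun i => (f i : R)

theorem coeff_weightSeries_pow (f : ℕ → ℕ) (k n : ℕ) :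
    coeff n (weightSeries R f ^ k) = extBinom f k n := by
  rw [← Fin.prod_const, coeff_prod, sum_finsuppAntidiag_univ_fin k n
    (fun π => ∏ i, coeff (π i) (weightSeries R f))]
  simp [extBinom, weightSeries]

end WeightSeries

theorem extBinom_granville (p : ℕ) (hp : p.Prime) (f : ℕ → ℕ) (k n : ℕ) :
    extBinom f k n ≡
      ∑ m ∈ Finset.range (n / p + 1),
        extBinom f (k / p) (n / p - m) * extBinom f (k % p) (n % p + m * p)
      [MOD p] := by
  have := Fact.mk hp
  set F := weightSeries (ZMod p) f
  have hsplit : F ^ k = expand p (NeZero.ne p) (F ^ (k / p)) * F ^ (k % p) := by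
    rw [expand_eq_pow_of_zmod, ← pow_mul, ← pow_add, mul_comm, Nat.div_add_mod]
  rw [← ZMod.natCast_eq_natCast_iff]
  push_cast
  simp only [← coeff_weightSeries_pow (ZMod p)]
  rw [hsplit, coeff_expand_mul_eq_sum]
end

section
/- (Glaisher's congruence) Let f : ℕ → ℕ be zero almost everywhere (i.e., there is N with f(s) = 0 for all s > N), let m ≥ 1, and for k, r ∈ ℕ define S(k, r) = ∑ binom(k,n)_f, the sum over all n ≥ 0 with n ≡ r (mod m). Then for every prime p with p ≡ 1 (mod m) and every k ≥ 1, S(k + p − 1, r) ≡ S(k, r) (mod p). -/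
/-
With `F = ∑ f(s) Xˢ`, `binom(k,n)_f` is the `n`-th coefficient of `Fᵏ`, so `S(k, r)` is the
coefficient of `r` in the image of `Fᵏ` in the group ring `ℕ[ℤ/m]` (exponents reduced mod `m`).
Over `𝔽_p`, Frobenius gives `Fᵖ = F(Xᵖ)`, and `p ≡ 1 (mod m)` makes `Xᵖ = X` in `𝔽_p[ℤ/m]`.
Hence `Fᵖ` and `F` have the same image in `𝔽_p[ℤ/m]`, and so do `F^(k+p-1) = F^(k-1) Fᵖ` and `Fᵏ`.
-/

open Finset Polynomial

theorem extBinom_succ (f : ℕ → ℕ) (k n : ℕ) :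
    extBinom f (k + 1) n = ∑ x ∈ antidiagonal n, f x.1 * extBinom f k x.2 := by
  simp only [extBinom, mul_sum, sum_sigma']
  refine sum_nbij' (fun π => ⟨(π 0, n - π 0), Fin.tail π⟩) (fun x => Fin.cons x.1.1 x.2)
    ?_ ?_ ?_ ?_ ?_
  · intro π hπ
    simp only [mem_sigma, HasAntidiagonal.mem_antidiagonal, Nat.mem_antidiagonalTuple,
      Fin.sum_univ_succ] at hπ ⊢
    exact ⟨by omega, by simp only [Fin.tail]; omega⟩
  · rintro ⟨⟨a, b⟩, σ⟩ h
    simp_all [Nat.mem_antidiagonalTuple, Fin.sum_univ_succ]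
  · intro π _
    simp
  · rintro ⟨⟨a, b⟩, σ⟩ h
    simp_all [Nat.mem_antidiagonalTuple]
    omega
  · intro π _
    simp [Fin.prod_univ_succ, Fin.tail]

theorem coeff_pow_eq_extBinom {R : Type*} [CommSemiring R] {f : ℕ → ℕ} {F : R[X]}
    (hF : ∀ s, F.coeff s = f s) (k n : ℕ) : (F ^ k).coeff n = extBinom f k n := by
  induction k generalizing n with
  | zero =>
    cases n <;>
      simp [extBinom, Nat.antidiagonalTuple_zero_zero, Nat.antidiagonalTuple_zero_succ, coeff_one]
  | succ k ih => simp [pow_succ', coeff_mul, extBinom_succ, hF, ih]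

theorem exists_polynomial_coeff_eq {R : Type*} [Semiring R] {f : ℕ → R}
    (hf : ∃ N, ∀ s > N, f s = 0) : ∃ F : R[X], ∀ s, F.coeff s = f s := by
  obtain ⟨N, hN⟩ := hf
  have hfin : (Function.support f).Finite :=
    (Set.finite_Iic N).subset fun s hs => not_lt.mp fun h => hs (hN s h)
  exact ⟨ofFinsupp (.ofCoeff (Finsupp.ofSupportFinite f hfin)), fun s => rfl⟩

/-- The quotient map `R[X] → R[X]/(Xᵐ - 1)`, with the quotient realised as `R[ℤ/m]`. -/
noncomputable def modExponents (R : Type*) [CommSemiring R] (m : ℕ) :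
    R[X] →ₐ[R] AddMonoidAlgebra R (ZMod m) :=
  aeval (AddMonoidAlgebra.of' R (ZMod m) 1)

section modExponents

variable {R : Type*} [CommSemiring R] {m : ℕ}

theorem modExponents_coeff (P : R[X]) (c : ZMod m) :
    (modExponents R m P).coeff c = ∑ᶠ n ∈ {n : ℕ | (n : ZMod m) = c}, P.coeff n := by
  rw [modExponents, aeval_eq_sum_range]
  simp only [AddMonoidAlgebra.of'_apply, AddMonoidAlgebra.single_pow, AddMonoidAlgebra.smul_single,
    AddMonoidAlgebra.coeff_sum, AddMonoidAlgebra.coeff_single, Finsupp.finsetSum_apply,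
    Finsupp.single_apply, nsmul_one, one_pow, smul_eq_mul, mul_one]
  rw [← sum_filter]
  refine (finsum_mem_eq_sum_of_inter_support_eq _ (Set.ext fun n => ?_)).symm
  simp only [Set.mem_inter_iff, Set.mem_ofPred_eq, Function.mem_support, coe_filter, mem_range]
  exact ⟨fun h => ⟨⟨Nat.lt_succ_of_le (le_natDegree_of_ne_zero h.2), h.1⟩, h.2⟩,
    fun h => ⟨h.1.2, h.2⟩⟩

theorem modExponents_expand {q : ℕ} (hq : (q : ZMod m) = 1) (P : R[X]) :
    modExponents R m (expand R q P) = modExponents R m P := by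
  suffices (modExponents R m).comp (expand R q) = modExponents R m from DFunLike.congr_fun this P
  apply algHom_ext
  simp [modExponents, AddMonoidAlgebra.single_pow, hq]

theorem modExponents_pow_char {p : ℕ} [Fact p.Prime] (hp : (p : ZMod m) = 1) (P : (ZMod p)[X]) :
    modExponents (ZMod p) m (P ^ p) = modExponents (ZMod p) m P := by
  rw [← ZMod.expand_card, modExponents_expand hp]

theorem modExponents_pow_add_prime_sub_one {p : ℕ} [Fact p.Prime] (hp : (p : ZMod m) = 1)
    (P : (ZMod p)[X]) {k : ℕ} (hk : 1 ≤ k) :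
    modExponents (ZMod p) m (P ^ (k + p - 1)) = modExponents (ZMod p) m (P ^ k) := by
  obtain ⟨j, rfl⟩ := Nat.exists_eq_add_of_le' hk
  rw [show j + 1 + p - 1 = j + p by omega, pow_add, map_mul, modExponents_pow_char hp, ← map_mul,
    ← pow_succ]

end modExponents

theorem cast_finsum_extBinom_eq_coeff_modExponents {R : Type*} [CommSemiring R] {f : ℕ → ℕ}
    {F : ℕ[X]} (hF : ∀ s, F.coeff s = f s) (m k r : ℕ) :
    ((∑ᶠ n ∈ {n : ℕ | n ≡ r [MOD m]}, extBinom f k n : ℕ) : R) =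
      (modExponents R m (F.map (Nat.castRingHom R) ^ k)).coeff r := by
  have hfin : (Function.support (extBinom f k)).Finite :=
    (F ^ k).support.finite_toSet.subset fun n hn => by
      simpa [coeff_pow_eq_extBinom hF] using hn
  have hFR : ∀ s, (F.map (Nat.castRingHom R)).coeff s = f s := by simp [hF]
  simp only [modExponents_coeff, ZMod.natCast_eq_natCast_iff, coeff_pow_eq_extBinom hFR]
  exact (Nat.castAddMonoidHom R).map_finsum_mem' (hfin.inter_of_right _)

theorem extBinom_glaisher_general (f : ℕ → ℕ) (hf : ∃ N, ∀ s > N, f s = 0)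
    (m : ℕ) (r : ℕ)
    (p : ℕ) (hp : p.Prime) (hpm : p ≡ 1 [MOD m]) (k : ℕ) (hk : 1 ≤ k) :
    (∑ᶠ n ∈ {n : ℕ | n ≡ r [MOD m]}, extBinom f (k + p - 1) n) ≡
      (∑ᶠ n ∈ {n : ℕ | n ≡ r [MOD m]}, extBinom f k n) [MOD p] := by
  have : Fact p.Prime := ⟨hp⟩
  obtain ⟨F, hF⟩ := exists_polynomial_coeff_eq hf
  have hp_one : (p : ZMod m) = 1 := by exact_mod_cast (ZMod.natCast_eq_natCast_iff p 1 m).2 hpm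
  rw [← ZMod.natCast_eq_natCast_iff, cast_finsum_extBinom_eq_coeff_modExponents hF,
    cast_finsum_extBinom_eq_coeff_modExponents hF, modExponents_pow_add_prime_sub_one hp_one _ hk]

theorem extBinom_glaisher (f : ℕ → ℕ) (hf : ∃ N, ∀ s > N, f s = 0)
    (m : ℕ) (hm : 1 ≤ m) (r : ℕ)
    (p : ℕ) (hp : p.Prime) (hpm : p ≡ 1 [MOD m]) (k : ℕ) (hk : 1 ≤ k) :
    (∑ᶠ n ∈ {n : ℕ | n ≡ r [MOD m]}, extBinom f (k + p - 1) n) ≡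
      (∑ᶠ n ∈ {n : ℕ | n ≡ r [MOD m]}, extBinom f k n) [MOD p] :=
  extBinom_glaisher_general f hf m r p hp hpm k hk
end
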